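/- arXiv:2010.13176 — 4 statements merged into one kernel-verified Lean document; each statement's English description precedes it below -/
import Mathlib

section
/- Let (Ω,≤) be a totally ordered set, ≺ a well-ordering of Ω, and let <_P be the natural left-ordering of Aut(Ω,≤) determined by ≺ via the standard construction. Suppose S ⊆ Ω satisfies: x ∈ S and y ≺ x imply y ∈ S. Then the pointwise stabilizer C_S = {φ ∈ Aut(Ω,≤) : φ(s) = s for all s ∈ S} is a convex subgroup of Aut(Ω,≤) with respect to <_P. -/
namespace Paper

/-- `f` is positive in the natural left-ordering of `Aut(Ω,≤)` determined by the
well-ordering `r` of `Ω` (Construction 3.1): the `r`-least point `x_f` moved by `f`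
satisfies `x_f < f x_f`.  (The point `x` below is the `r`-least moved point, since all
`r`-smaller points are required to be fixed.) -/
def NatPos {Ω : Type*} [LinearOrder Ω] (r : Ω → Ω → Prop) (f : Ω ≃o Ω) : Prop :=
  ∃ x : Ω, f x ≠ x ∧ (∀ y : Ω, r y x → f y = y) ∧ x < f x

/-- The natural left-ordering `<_P` of `Aut(Ω,≤)` determined by `r`: `f <_P g` iff
`f⁻¹ * g` lies in the positive cone. -/
def NatLt {Ω : Type*} [LinearOrder Ω] (r : Ω → Ω → Prop) (f g : Ω ≃o Ω) : Prop :=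
  NatPos r (f⁻¹ * g)

/-!
If `h` moves a point of `S`, then so do `f⁻¹ * h` and `h⁻¹ * g` for `f, g ∈ C_S`, and the
`r`-least points they move lie in the initial segment `S`. On `S` the automorphisms `f⁻¹ * h`
and `h` have the same fixed points and push points in the same direction, as do `h⁻¹ * g` and
`h⁻¹`. So `f <_P h <_P g` would make both `h` and `h⁻¹` positive, which is impossible since
`h` and `h⁻¹` have the same least moved point and move it in opposite directions.
-/

section NaturalOrdering

variable {Ω : Type*} [LinearOrder Ω] {r : Ω → Ω → Prop} [Std.Trichotomous r]

theorem orderIso_inv_apply_eq_self_iff (f : Ω ≃o Ω) (y : Ω) : f⁻¹ y = y ↔ f y = y :=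
  f.symm_apply_eq.trans eq_comm

theorem eq_of_least_moved {f : Ω ≃o Ω} {x x' : Ω} (hx : f x ≠ x)
    (hx_min : ∀ y, r y x → f y = y) (hx' : f x' ≠ x') (hx'_min : ∀ y, r y x' → f y = y) :
    x = x' := by
  rcases trichotomous_of r x x' with h | h | h
  · exact absurd (hx'_min x h) hx
  · exact h
  · exact absurd (hx_min x' h) hx'

theorem mem_of_least_moved {S : Set Ω} (hS : ∀ x ∈ S, ∀ y, r y x → y ∈ S) {f : Ω ≃o Ω}
    {s x : Ω} (hs : s ∈ S) (hfs : f s ≠ s) (hx_min : ∀ y, r y x → f y = y) : x ∈ S := by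
  rcases trichotomous_of r x s with h | rfl | h
  · exact hS s hs x h
  · exact hs
  · exact absurd (hx_min s h) hfs

theorem NatPos.of_agreeOn {S : Set Ω} (hS : ∀ x ∈ S, ∀ y, r y x → y ∈ S)
    {ψ₁ ψ₂ : Ω ≃o Ω} (hfix : ∀ y ∈ S, ψ₁ y = y ↔ ψ₂ y = y)
    (hlt : ∀ y ∈ S, y < ψ₁ y ↔ y < ψ₂ y) {s : Ω} (hs : s ∈ S) (hmove : ψ₁ s ≠ s)
    (hpos : NatPos r ψ₁) : NatPos r ψ₂ := by
  obtain ⟨x, hx, hx_min, hx_lt⟩ := hpos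
  have hxS : x ∈ S := mem_of_least_moved hS hs hmove hx_min
  exact ⟨x, mt (hfix x hxS).2 hx, fun y hy => (hfix y (hS x hxS y hy)).1 (hx_min y hy),
    (hlt x hxS).1 hx_lt⟩

theorem natPos_iff_of_agreeOn {S : Set Ω} (hS : ∀ x ∈ S, ∀ y, r y x → y ∈ S)
    {ψ₁ ψ₂ : Ω ≃o Ω} (hfix : ∀ y ∈ S, ψ₁ y = y ↔ ψ₂ y = y)
    (hlt : ∀ y ∈ S, y < ψ₁ y ↔ y < ψ₂ y) {s : Ω} (hs : s ∈ S) (hmove : ψ₂ s ≠ s) :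
    NatPos r ψ₁ ↔ NatPos r ψ₂ :=
  ⟨NatPos.of_agreeOn hS hfix hlt hs (mt (hfix s hs).1 hmove),
    NatPos.of_agreeOn hS (fun y hy => (hfix y hy).symm) (fun y hy => (hlt y hy).symm) hs hmove⟩

theorem natPos_mul_left_iff {S : Set Ω} (hS : ∀ x ∈ S, ∀ y, r y x → y ∈ S)
    {f ψ : Ω ≃o Ω} (hf : ∀ y ∈ S, f y = y) {s : Ω} (hs : s ∈ S) (hmove : ψ s ≠ s) :
    NatPos r (f * ψ) ↔ NatPos r ψ := by
  refine natPos_iff_of_agreeOn hS (fun y hy => ?_) (fun y hy => ?_) hs hmove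
  · exact f.injective.eq_iff' (hf y hy)
  · change y < f (ψ y) ↔ y < ψ y
    nth_rw 1 [← hf y hy]
    exact f.lt_iff_lt

theorem natPos_mul_right_iff {S : Set Ω} (hS : ∀ x ∈ S, ∀ y, r y x → y ∈ S)
    {ψ g : Ω ≃o Ω} (hg : ∀ y ∈ S, g y = y) {s : Ω} (hs : s ∈ S) (hmove : ψ s ≠ s) :
    NatPos r (ψ * g) ↔ NatPos r ψ := by
  have hagree : ∀ y ∈ S, (ψ * g) y = ψ y := fun y hy => congrArg ψ (hg y hy)
  exact natPos_iff_of_agreeOn hS (fun y hy => by rw [hagree y hy])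
    (fun y hy => by rw [hagree y hy]) hs hmove

theorem not_natPos_and_natPos_inv (f : Ω ≃o Ω) : ¬(NatPos r f ∧ NatPos r f⁻¹) := by
  rintro ⟨⟨x, hx, hx_min, hx_lt⟩, ⟨x', hx', hx'_min, hx'_lt⟩⟩
  obtain rfl : x = x' :=
    eq_of_least_moved hx hx_min (mt (orderIso_inv_apply_eq_self_iff f x').2 hx')
      fun y hy => (orderIso_inv_apply_eq_self_iff f y).1 (hx'_min y hy)
  have hfx : f x < x := by simpa using f.lt_iff_lt.2 hx'_lt
  exact lt_asymm hx_lt hfx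

end NaturalOrdering

/-- Proposition 3.2: if `S ⊆ Ω` is downward closed for the well-ordering `r`, then the
pointwise stabilizer `C_S` is a convex subgroup of `Aut(Ω,≤)` with respect to the natural
left-ordering determined by `r`. -/
theorem stmt0 {Ω : Type*} [LinearOrder Ω] (r : Ω → Ω → Prop) [IsWellOrder Ω r]
    (S : Set Ω) (hS : ∀ x ∈ S, ∀ y : Ω, r y x → y ∈ S)
    (C : Set (Ω ≃o Ω)) (hC : C = {φ : Ω ≃o Ω | ∀ s ∈ S, φ s = s}) :
    (1 ∈ C) ∧ (∀ f ∈ C, ∀ g ∈ C, f * g ∈ C) ∧ (∀ f ∈ C, f⁻¹ ∈ C) ∧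
    (∀ f ∈ C, ∀ g ∈ C, ∀ h : Ω ≃o Ω, NatLt r f h → NatLt r h g → h ∈ C) := by
  subst hC
  have inv_mem : ∀ f : Ω ≃o Ω, (∀ s ∈ S, f s = s) → ∀ s ∈ S, f⁻¹ s = s :=
    fun f hf s hs => (orderIso_inv_apply_eq_self_iff f s).2 (hf s hs)
  refine ⟨fun _ _ => rfl, fun f hf g hg s hs => ?_, inv_mem, ?_⟩
  · change f (g s) = s
    rw [hg s hs, hf s hs]
  intro f hf g hg h hfh hhg
  by_contra hh
  obtain ⟨s, hs, hhs⟩ : ∃ s ∈ S, h s ≠ s := by simpa using hh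
  have hpos : NatPos r h := (natPos_mul_left_iff hS (inv_mem f hf) hs hhs).1 hfh
  have hneg : NatPos r h⁻¹ :=
    (natPos_mul_right_iff hS hg hs (mt (orderIso_inv_apply_eq_self_iff h s).1 hhs)).1 hhg
  exact not_natPos_and_natPos_inv h ⟨hpos, hneg⟩

end Paper
end

section
/- Let F(X) be the free group on the generating set X = {x_r : r ∈ ℝ}. Then F(X) admits a positive cone P (equivalently, a left-ordering) such that for every subset S ⊆ ℝ which is downward closed (x ∈ S and y < x imply y ∈ S), the subgroup F(X_S) generated by {x_r : r ∈ S} is convex with respect to the left-ordering determined by P. -/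
namespace Paper

/-- A positive cone of a group `G`: `P · P ⊆ P` and `P ∪ P⁻¹ = G ∖ {1}`.
It determines a left-ordering by `g < h` iff `g⁻¹h ∈ P`. -/
def IsPositiveCone {G : Type*} [Group G] (P : Set G) : Prop :=
  (∀ a ∈ P, ∀ b ∈ P, a * b ∈ P) ∧ (P ∪ P⁻¹ = {g : G | g ≠ 1})

/-- The left-ordering determined by a positive cone. -/
def coneLt {G : Type*} [Group G] (P : Set G) (a b : G) : Prop := a⁻¹ * b ∈ P

end Paper

/-!
Let `K` be linearly ordered. For `w ≠ 1` in `F(K)` let `x_r` be the largest generator occurring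
in `w`. If the exponent sum of `x_r` in `w` is nonzero, its sign is the sign of `w`. Otherwise `w`
lies in the kernel of that exponent sum, which is free on the conjugates `x_r^k x_s x_r^{-k}`
(Reidemeister–Schreier, realised by mapping `F(K)` into `F(ℤ × K) ⋊ ℤ`). Rewriting `w` in this
basis strictly shortens it, and we recurse, ordering `ℤ × K` lexicographically with level `0`
first. Totality and closure under products follow by induction on word length.

For convexity, let `S` be a lower set, `f < h < g` with `f, g ∈ ⟨x_S⟩`, and let `x_r` be the
largest generator of `h` outside `S`. It bounds the generators of `f⁻¹h` and of `h⁻¹g`, whose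
exponent sums at `r` are `e` and `-e` for the exponent sum `e` of `x_r` in `h`; both are
nonnegative, so `e = 0`. Rewriting at `r` sends `f` and `g` into the subgroup generated by the
level-`0` copy of `S`, again a lower set, so by induction the rewritten `h` lies there as well,
and hence `h ∈ ⟨x_S⟩`.
-/

namespace FreeGroup

variable {α β : Type*}

theorem mk_singleton (a : α) (b : Bool) : mk [(a, b)] = if b then of a else (of a)⁻¹ := by
  cases b
  · rw [of, inv_mk]
    rfl
  · rfl

theorem mk_mem_closure {A : Set α} {L : List (α × Bool)} (hL : ∀ p ∈ L, p.1 ∈ A) :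
    mk L ∈ Subgroup.closure (of '' A) := by
  induction L with
  | nil => exact one_mem _
  | cons p L ih =>
    have hp : of p.1 ∈ Subgroup.closure (of '' A) :=
      Subgroup.subset_closure ⟨p.1, hL p List.mem_cons_self, rfl⟩
    rw [← List.singleton_append, ← mul_mk, mk_singleton]
    refine mul_mem ?_ (ih fun q hq => hL q (List.mem_cons_of_mem p hq))
    split_ifs
    · exact hp
    · exact inv_mem hp

theorem map_mem_closure_image (f : α → β) {A : Set α} {w : FreeGroup α}
    (hw : w ∈ Subgroup.closure (of '' A)) : map f w ∈ Subgroup.closure (of '' (f '' A)) := by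
  simpa [MonoidHom.map_closure, Set.image_image] using Subgroup.mem_map_of_mem (map f) hw

variable [DecidableEq α] [DecidableEq β]

def support (w : FreeGroup α) : Finset α := (w.toWord.map Prod.fst).toFinset

@[simp] theorem mem_support {w : FreeGroup α} {a : α} :
    a ∈ w.support ↔ ∃ b, (a, b) ∈ w.toWord := by
  simp [support]

@[simp] theorem support_one : (1 : FreeGroup α).support = ∅ := by
  simp [support]

theorem support_eq_empty {w : FreeGroup α} : w.support = ∅ ↔ w = 1 := by
  simp [support, List.map_eq_nil_iff, toWord_eq_nil_iff]

@[simp] theorem support_of (a : α) : (of a).support = {a} := by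
  simp [support, toWord_of]

theorem support_mul_subset (u w : FreeGroup α) : (u * w).support ⊆ u.support ∪ w.support := by
  intro a ha
  obtain ⟨b, hb⟩ := mem_support.1 ha
  rcases List.mem_append.1 ((toWord_mul_sublist u w).subset hb) with h | h
  · exact Finset.mem_union_left _ (mem_support.2 ⟨b, h⟩)
  · exact Finset.mem_union_right _ (mem_support.2 ⟨b, h⟩)

@[simp] theorem support_inv (w : FreeGroup α) : w⁻¹.support = w.support := by
  ext a
  simp [toWord_inv, invRev, or_comm]

theorem mem_closure_iff_support_subset {A : Set α} {w : FreeGroup α} :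
    w ∈ Subgroup.closure (of '' A) ↔ ↑w.support ⊆ A := by
  constructor
  · intro hw
    induction hw using Subgroup.closure_induction with
    | mem x hx => obtain ⟨a, ha, rfl⟩ := hx; simpa using ha
    | one => simp
    | mul x y _ _ hx hy =>
      exact (Finset.coe_subset.2 (support_mul_subset x y)).trans (by simp [hx, hy])
    | inv x _ hx => simpa using hx
  · intro hw
    rw [← mk_toWord (x := w)]
    exact mk_mem_closure fun p hp => hw (mem_support.2 ⟨p.2, hp⟩)

theorem hom_eq_of_eqOn_support {G : Type*} [Monoid G] {φ ψ : FreeGroup α →* G}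
    {w : FreeGroup α} (h : ∀ a ∈ w.support, φ (of a) = ψ (of a)) : φ w = ψ w :=
  MonoidHom.eqOn_closure (by rintro _ ⟨a, ha, rfl⟩; exact h a ha)
    (mem_closure_iff_support_subset.2 subset_rfl)

theorem toWord_map {f : α → β} (hf : Function.Injective f) (w : FreeGroup α) :
    (map f w).toWord = w.toWord.map fun p => (f p.1, p.2) := by
  have hred : IsReduced (w.toWord.map fun p => (f p.1, p.2)) :=
    (List.isChain_map _).2 (isReduced_toWord.imp fun p q h hpq => h (hf hpq))
  rw [← hred.reduce_eq, ← toWord_mk, ← map.mk, mk_toWord]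

theorem support_map {f : α → β} (hf : Function.Injective f) (w : FreeGroup α) :
    (map f w).support = w.support.image f := by
  ext b
  simp [support, toWord_map hf]

theorem norm_map {f : α → β} (hf : Function.Injective f) (w : FreeGroup α) :
    (map f w).norm = w.norm := by
  simp [norm, toWord_map hf]

def expSum (r : α) : FreeGroup α →* Multiplicative ℤ :=
  lift fun s => if s = r then Multiplicative.ofAdd 1 else 1

theorem expSum_eq_one_of_not_mem_support {r : α} {w : FreeGroup α} (h : r ∉ w.support) :
    expSum r w = 1 :=
  hom_eq_of_eqOn_support (ψ := 1) fun a ha => by simp [expSum, ne_of_mem_of_not_mem ha h]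

theorem expSum_map {f : α → β} (hf : Function.Injective f) (r : α) (w : FreeGroup α) :
    expSum (f r) (map f w) = expSum r w := by
  change ((expSum (f r)).comp (map f)) w = expSum r w
  congr 1
  exact ext_hom _ _ fun s => by simp [expSum, hf.eq_iff]

end FreeGroup

theorem Set.Finite.exists_mem_sdiff_upperBounds_union {K : Type*} [LinearOrder K] {A S : Set K}
    (hA : A.Finite) (hS : IsLowerSet S) (hAS : ¬ A ⊆ S) :
    ∃ r ∈ A \ S, r ∈ upperBounds (A ∪ S) := by
  obtain ⟨r, hr, hmax⟩ := Set.exists_max_image _ id hA.sdiff (Set.sdiff_nonempty.2 hAS)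
  have hSr : r ∈ upperBounds S := fun s hs => not_lt.1 fun hrs => hr.2 (hS hrs.le hs)
  refine ⟨r, hr, ?_⟩
  rw [upperBounds_union]
  refine ⟨fun s hs => ?_, hSr⟩
  by_cases hsS : s ∈ S
  exacts [hSr hsS, hmax s ⟨hs, hsS⟩]

namespace Paper

open FreeGroup (of mk expSum)
open SemidirectProduct (inl inr)

/-- `⟨k, s⟩` stands for the generator `x_r^k x_s x_r^{-k}` of the kernel of `expSum r`. -/
@[ext]
structure Layered (K : Type*) where
  level : ℤ
  gen : K

namespace Layered

variable {K K' : Type*}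

def base (s : K) : Layered K := ⟨0, s⟩

def shift (k : ℤ) : Layered K ≃ Layered K where
  toFun p := ⟨p.level + k, p.gen⟩
  invFun p := ⟨p.level - k, p.gen⟩
  left_inv p := by simp
  right_inv p := by simp

@[simp] theorem shift_apply (k : ℤ) (p : Layered K) : shift k p = ⟨p.level + k, p.gen⟩ := rfl

def map (ι : K → K') (p : Layered K) : Layered K' := ⟨p.level, ι p.gen⟩

variable [LinearOrder K] [LinearOrder K']

-- Lexicographic, with levels compared through `Equiv.intEquivNat`, which puts level `0` first:
-- this is what keeps `base '' S` a lower set.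
instance : LinearOrder (Layered K) :=
  LinearOrder.lift' (fun p => toLex (Equiv.intEquivNat p.level, p.gen)) fun p q h => by
    simp only [Prod.mk.injEq, EmbeddingLike.apply_eq_iff_eq] at h
    exact Layered.ext h.1 h.2

theorem lt_iff {p q : Layered K} :
    p < q ↔ Equiv.intEquivNat p.level < Equiv.intEquivNat q.level ∨
      p.level = q.level ∧ p.gen < q.gen := by
  rw [← Equiv.intEquivNat.apply_eq_iff_eq]
  exact Prod.Lex.toLex_lt_toLex

theorem base_strictMono : StrictMono (base : K → Layered K) := fun a b h => by
  simp [lt_iff, base, h]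

theorem isLowerSet_image_base {S : Set K} (hS : IsLowerSet S) : IsLowerSet (base '' S) := by
  rw [isLowerSet_iff_forall_lt] at hS ⊢
  rintro _ q hq ⟨s, hs, rfl⟩
  have h0 : Equiv.intEquivNat (0 : ℤ) = 0 := rfl
  rcases lt_iff.1 hq with h | ⟨h1, h2⟩
  · simp [base, h0] at h
  · exact ⟨q.gen, hS h2 hs, Layered.ext h1.symm rfl⟩

theorem map_strictMono {ι : K → K'} (hι : StrictMono ι) : StrictMono (map ι) := by
  intro p q hpq
  rcases lt_iff.1 hpq with h | ⟨h1, h2⟩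
  · exact lt_iff.2 (Or.inl h)
  · exact lt_iff.2 (Or.inr ⟨h1, hι h2⟩)

end Layered

section Splitting

variable {K K' : Type*}

def shiftAut : Multiplicative ℤ →* MulAut (FreeGroup (Layered K)) where
  toFun k := FreeGroup.freeGroupCongr (Layered.shift k.toAdd)
  map_one' := MulEquiv.toMonoidHom_injective <| FreeGroup.ext_hom _ _ fun p => by simp
  map_mul' a b := MulEquiv.toMonoidHom_injective <| FreeGroup.ext_hom _ _ fun p => by
    simp [add_left_comm, add_comm]

@[simp] theorem shiftAut_of (k : Multiplicative ℤ) (p : Layered K) :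
    shiftAut k (of p) = of ⟨p.level + k.toAdd, p.gen⟩ := by
  simp [shiftAut]

abbrev SplitGroup (K : Type*) := FreeGroup (Layered K) ⋊[shiftAut] Multiplicative ℤ

def conjLift (r : K) : FreeGroup (Layered K) →* FreeGroup K :=
  FreeGroup.lift fun p => of r ^ p.level * of p.gen * (of r ^ p.level)⁻¹

@[simp] theorem conjLift_of_base (r s : K) : conjLift r (of (Layered.base s)) = of s := by
  simp [conjLift, Layered.base]

def unsplitAt (r : K) : SplitGroup K →* FreeGroup K :=
  SemidirectProduct.lift (conjLift r) (zpowersHom _ (of r)) fun k =>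
    FreeGroup.ext_hom _ _ fun p => by
      change conjLift r (shiftAut k (of p)) =
        of r ^ k.toAdd * conjLift r (of p) * (of r ^ k.toAdd)⁻¹
      simp only [conjLift, shiftAut_of, FreeGroup.lift_apply_of]
      group

theorem conjLift_mem_closure (r : K) {S : Set K} {v : FreeGroup (Layered K)}
    (hv : v ∈ Subgroup.closure (of '' (Layered.base '' S))) :
    conjLift r v ∈ Subgroup.closure (of '' S) := by
  simpa [MonoidHom.map_closure, Set.image_image] using Subgroup.mem_map_of_mem (conjLift r) hv

variable [LinearOrder K] [LinearOrder K']

theorem norm_shiftAut (k : Multiplicative ℤ) (v : FreeGroup (Layered K)) :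
    (shiftAut k v).norm = v.norm :=
  FreeGroup.norm_map (Layered.shift k.toAdd).injective v

def splitAt (r : K) : FreeGroup K →* SplitGroup K :=
  FreeGroup.lift fun s =>
    if s = r then inr (Multiplicative.ofAdd 1) else inl (of (Layered.base s))

def descend (r : K) (w : FreeGroup K) : FreeGroup (Layered K) := (splitAt r w).left

theorem splitAt_of_self (r : K) : splitAt r (of r) = inr (Multiplicative.ofAdd 1) := by
  simp [splitAt]

theorem splitAt_of_of_ne {r s : K} (h : s ≠ r) :
    splitAt r (of s) = inl (of (Layered.base s)) := by
  simp [splitAt, h]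

theorem right_splitAt (r : K) (w : FreeGroup K) : (splitAt r w).right = expSum r w := by
  change (SemidirectProduct.rightHom.comp (splitAt r)) w = expSum r w
  congr 1
  exact FreeGroup.ext_hom _ _ fun s => by
    by_cases h : s = r
    · simp [h, splitAt_of_self, FreeGroup.expSum]
    · simp [h, splitAt_of_of_ne, FreeGroup.expSum]

theorem splitAt_eq_inl_descend {r : K} {w : FreeGroup K} (he : expSum r w = 1) :
    splitAt r w = inl (descend r w) := by
  rw [← SemidirectProduct.inl_left_mul_inr_right (splitAt r w), right_splitAt, he, map_one,
    mul_one, descend]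

theorem unsplitAt_comp_splitAt (r : K) : (unsplitAt r).comp (splitAt r) = MonoidHom.id _ :=
  FreeGroup.ext_hom _ _ fun s => by
    by_cases h : s = r
    · simp [h, splitAt_of_self, unsplitAt]
    · simp [h, splitAt_of_of_ne, unsplitAt]

theorem conjLift_descend {r : K} {w : FreeGroup K} (he : expSum r w = 1) :
    conjLift r (descend r w) = w := by
  have := DFunLike.congr_fun (unsplitAt_comp_splitAt r) w
  rwa [MonoidHom.comp_apply, splitAt_eq_inl_descend he, unsplitAt,
    SemidirectProduct.lift_inl] at this

theorem descend_mul {r : K} {u : FreeGroup K} (he : expSum r u = 1) (w : FreeGroup K) :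
    descend r (u * w) = descend r u * descend r w := by
  rw [descend, map_mul, splitAt_eq_inl_descend he, SemidirectProduct.mul_left,
    SemidirectProduct.left_inl, SemidirectProduct.right_inl, map_one]
  rfl

theorem descend_inv {r : K} {w : FreeGroup K} (he : expSum r w = 1) :
    descend r w⁻¹ = (descend r w)⁻¹ := by
  rw [descend, map_inv, splitAt_eq_inl_descend he, ← map_inv, SemidirectProduct.left_inl]

theorem descend_of_not_mem_support {r : K} {w : FreeGroup K} (h : r ∉ w.support) :
    descend r w = FreeGroup.map Layered.base w := by
  have : splitAt r w = (inl.comp (FreeGroup.map Layered.base)) w :=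
    FreeGroup.hom_eq_of_eqOn_support fun s hs => by
      simp [splitAt_of_of_ne (ne_of_mem_of_not_mem hs h)]
  rw [descend, this]
  rfl

theorem descend_map {ι : K → K'} (hι : Function.Injective ι) (r : K) (w : FreeGroup K) :
    descend (ι r) (FreeGroup.map ι w) = FreeGroup.map (Layered.map ι) (descend r w) := by
  let mapSplit : SplitGroup K →* SplitGroup K' :=
    SemidirectProduct.map (FreeGroup.map (Layered.map ι)) (MonoidHom.id _) fun k =>
      FreeGroup.ext_hom _ _ fun p => by simp [Layered.map]
  have h : (splitAt (ι r)).comp (FreeGroup.map ι) = mapSplit.comp (splitAt r) :=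
    FreeGroup.ext_hom _ _ fun s => by
      by_cases hs : s = r
      · simp [hs, splitAt_of_self, mapSplit]
      · simp [splitAt_of_of_ne hs, splitAt_of_of_ne (hι.ne hs), mapSplit, Layered.map,
          Layered.base]
  exact congrArg SemidirectProduct.left (DFunLike.congr_fun h w)

theorem norm_descend_mul_le (r : K) (u w : FreeGroup K) :
    (descend r (u * w)).norm ≤ (descend r u).norm + (descend r w).norm := by
  rw [descend, map_mul, SemidirectProduct.mul_left,
    ← norm_shiftAut (splitAt r u).right (descend r w)]
  exact FreeGroup.norm_mul_le _ _

theorem norm_descend_inv (r : K) (w : FreeGroup K) :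
    (descend r w⁻¹).norm = (descend r w).norm := by
  rw [descend, map_inv, SemidirectProduct.inv_left, norm_shiftAut, FreeGroup.norm_inv_eq]
  rfl

theorem norm_descend_mk_add_countP_le (r : K) (L : List (K × Bool)) :
    (descend r (mk L)).norm + L.countP (·.1 = r) ≤ L.length := by
  induction L with
  | nil => simp [← FreeGroup.one_eq_mk, descend]
  | cons p L ih =>
    have hp : (descend r (mk [p])).norm + (if p.1 = r then 1 else 0) ≤ 1 := by
      obtain ⟨s, b⟩ := p
      have hs : (descend r (of s)).norm + (if s = r then 1 else 0) ≤ 1 := by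
        by_cases h : s = r
        · simp [h, descend, splitAt_of_self]
        · simp [h, descend, splitAt_of_of_ne]
      cases b <;> simpa [FreeGroup.mk_singleton, norm_descend_inv] using hs
    have := norm_descend_mul_le r (mk [p]) (mk L)
    rw [FreeGroup.mul_mk, List.singleton_append] at this
    simp only [List.countP_cons, List.length_cons, decide_eq_true_eq] at hp ⊢
    omega

theorem norm_descend_le (r : K) (w : FreeGroup K) : (descend r w).norm ≤ w.norm := by
  have := norm_descend_mk_add_countP_le r w.toWord
  rw [FreeGroup.mk_toWord] at this
  exact le_of_add_le_left this

theorem norm_descend_lt {r : K} {w : FreeGroup K} (h : r ∈ w.support) :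
    (descend r w).norm < w.norm := by
  have := norm_descend_mk_add_countP_le r w.toWord
  rw [FreeGroup.mk_toWord] at this
  obtain ⟨b, hb⟩ := FreeGroup.mem_support.1 h
  have : 0 < w.toWord.countP (·.1 = r) := List.countP_pos_iff.2 ⟨(r, b), hb, by simp⟩
  have hw : w.norm = w.toWord.length := rfl
  omega

end Splitting

section Positivity

universe u

-- The fuel `n` makes the recursion through `K`, `Layered K`, `Layered (Layered K)`, … structural.
def IsPosWithin : ℕ → (K : Type u) → [LinearOrder K] → FreeGroup K → Prop
  | 0, _, _, _ => False
  | n + 1, K, _, w => ∃ r, IsGreatest (↑w.support : Set K) r ∧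
      (1 < expSum r w ∨ (expSum r w = 1 ∧ IsPosWithin n (Layered K) (descend r w)))

def IsPos {K : Type u} [LinearOrder K] (w : FreeGroup K) : Prop := ∃ n, IsPosWithin n K w

variable {K : Type u} {K' : Type*} [LinearOrder K] [LinearOrder K'] {r : K} {u w : FreeGroup K}

theorem isPos_iff : IsPos w ↔ ∃ r, IsGreatest (↑w.support : Set K) r ∧
    (1 < expSum r w ∨ (expSum r w = 1 ∧ IsPos (descend r w))) := by
  constructor
  · rintro ⟨_ | n, hn⟩
    · exact hn.elim
    · obtain ⟨r, hr, h⟩ := hn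
      exact ⟨r, hr, h.imp_right fun h => ⟨h.1, n, h.2⟩⟩
  · rintro ⟨r, hr, h | ⟨he, n, hn⟩⟩
    · exact ⟨1, r, hr, Or.inl h⟩
    · exact ⟨n + 1, r, hr, Or.inr ⟨he, hn⟩⟩

theorem isPos_iff_of_isGreatest (hr : IsGreatest (↑w.support : Set K) r) :
    IsPos w ↔ 1 < expSum r w ∨ (expSum r w = 1 ∧ IsPos (descend r w)) := by
  rw [isPos_iff]
  constructor
  · rintro ⟨r', hr', h⟩
    rwa [hr.unique hr']
  · exact fun h => ⟨r, hr, h⟩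

theorem not_isPos_one : ¬ IsPos (1 : FreeGroup K) := by
  rw [isPos_iff]
  simp [IsGreatest]

theorem IsPos.ne_one (hw : IsPos w) : w ≠ 1 := by
  rintro rfl
  exact not_isPos_one hw

theorem exists_isGreatest_support (hw : w ≠ 1) : ∃ r, IsGreatest (↑w.support : Set K) r :=
  ⟨_, Finset.isGreatest_max' _ <|
    Finset.nonempty_iff_ne_empty.2 (mt FreeGroup.support_eq_empty.1 hw)⟩

theorem IsPos.one_le_expSum (hw : IsPos w) (hr : r ∈ upperBounds (↑w.support : Set K)) :
    1 ≤ expSum r w := by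
  by_cases hmem : r ∈ w.support
  · rcases (isPos_iff_of_isGreatest ⟨hmem, hr⟩).1 hw with h | ⟨h, -⟩
    exacts [h.le, h.ge]
  · exact (FreeGroup.expSum_eq_one_of_not_mem_support hmem).ge

theorem isPos_of_one_lt_expSum (hr : r ∈ upperBounds (↑w.support : Set K))
    (h : 1 < expSum r w) : IsPos w := by
  have hmem : r ∈ w.support := by
    by_contra hmem
    exact h.ne' (FreeGroup.expSum_eq_one_of_not_mem_support hmem)
  exact (isPos_iff_of_isGreatest ⟨hmem, hr⟩).2 (Or.inl h)

theorem mem_upperBounds_support_mul (hu : r ∈ upperBounds (↑u.support : Set K))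
    (hw : r ∈ upperBounds (↑w.support : Set K)) :
    r ∈ upperBounds (↑(u * w).support : Set K) :=
  fun _ hs => (Finset.mem_union.1 (FreeGroup.support_mul_subset u w hs)).elim (hu ·) (hw ·)

theorem isPos_map_iff {ι : K → K'} (hι : StrictMono ι) (w : FreeGroup K) :
    IsPos (FreeGroup.map ι w) ↔ IsPos w := by
  induction hn : w.norm using Nat.strong_induction_on generalizing K K' with
  | _ n ih =>
  by_cases hw : w = 1
  · simp [hw, not_isPos_one]
  obtain ⟨r, hr⟩ := exists_isGreatest_support hw
  have hr' : IsGreatest (↑(FreeGroup.map ι w).support : Set K') (ι r) := by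
    rwa [FreeGroup.support_map hι.injective, Finset.coe_image, hι.map_isGreatest]
  rw [isPos_iff_of_isGreatest hr, isPos_iff_of_isGreatest hr', FreeGroup.expSum_map hι.injective,
    descend_map hι.injective,
    ih _ (hn ▸ norm_descend_lt hr.1) (Layered.map_strictMono hι) _ rfl]

theorem isPos_iff_isPos_descend (hr : r ∈ upperBounds (↑w.support : Set K))
    (he : expSum r w = 1) : IsPos w ↔ IsPos (descend r w) := by
  by_cases hmem : r ∈ w.support
  · simp [isPos_iff_of_isGreatest ⟨hmem, hr⟩, he]
  · rw [descend_of_not_mem_support hmem, isPos_map_iff Layered.base_strictMono]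

theorem isPos_inv_mul_iff_descend {x y : FreeGroup K}
    (hr : r ∈ upperBounds (↑(x⁻¹ * y).support : Set K)) (hx : expSum r x = 1)
    (hy : expSum r y = 1) : IsPos (x⁻¹ * y) ↔ IsPos ((descend r x)⁻¹ * descend r y) := by
  rw [isPos_iff_isPos_descend hr (by simp [hx, hy]), descend_mul (by simp [hx]), descend_inv hx]

theorem isPos_or_isPos_inv (hw : w ≠ 1) : IsPos w ∨ IsPos w⁻¹ := by
  induction hn : w.norm using Nat.strong_induction_on generalizing K with
  | _ n ih =>
  obtain ⟨r, hr⟩ := exists_isGreatest_support hw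
  have hr' : r ∈ upperBounds (↑w⁻¹.support : Set K) := by simpa using hr.2
  rcases lt_trichotomy (expSum r w) 1 with h | h | h
  · exact Or.inr (isPos_of_one_lt_expSum hr' (by rwa [map_inv, one_lt_inv']))
  · have hv : descend r w ≠ 1 := fun hv => hw (by rw [← conjLift_descend h, hv, map_one])
    rcases ih _ (hn ▸ norm_descend_lt hr.1) hv rfl with hp | hp
    · exact Or.inl ((isPos_iff_isPos_descend hr.2 h).2 hp)
    · refine Or.inr ((isPos_iff_isPos_descend hr' (by rw [map_inv, h, inv_one])).2 ?_)
      rwa [descend_inv h]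
  · exact Or.inl (isPos_of_one_lt_expSum hr.2 h)

theorem IsPos.mul (hu : IsPos u) (hw : IsPos w) : IsPos (u * w) := by
  induction hn : u.norm + w.norm using Nat.strong_induction_on generalizing K with
  | _ n ih =>
  obtain ⟨a, ha⟩ := exists_isGreatest_support hu.ne_one
  obtain ⟨b, hb⟩ := exists_isGreatest_support hw.ne_one
  have hru : max a b ∈ upperBounds (↑u.support : Set K) := fun _ hs =>
    (ha.2 hs).trans (le_max_left a b)
  have hrw : max a b ∈ upperBounds (↑w.support : Set K) := fun _ hs =>
    (hb.2 hs).trans (le_max_right a b)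
  have hruw := mem_upperBounds_support_mul hru hrw
  have h1 := hu.one_le_expSum hru
  have h2 := hw.one_le_expSum hrw
  rcases (one_le_mul h1 h2).lt_or_eq with h | h
  · exact isPos_of_one_lt_expSum hruw (by rwa [map_mul])
  obtain ⟨hu1, hw1⟩ := (mul_eq_one_iff_of_one_le h1 h2).1 h.symm
  have hlt : (descend (max a b) u).norm + (descend (max a b) w).norm < n := by
    have := norm_descend_le (max a b) u
    have := norm_descend_le (max a b) w
    rcases max_choice a b with hr | hr
    · have := norm_descend_lt (show max a b ∈ u.support by rw [hr]; exact ha.1)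
      omega
    · have := norm_descend_lt (show max a b ∈ w.support by rw [hr]; exact hb.1)
      omega
  rw [isPos_iff_isPos_descend hruw (by rw [map_mul, hu1, hw1, one_mul]), descend_mul hu1]
  exact ih _ hlt ((isPos_iff_isPos_descend hru hu1).1 hu)
    ((isPos_iff_isPos_descend hrw hw1).1 hw) rfl

theorem mem_closure_of_isPos {S : Set K} (hS : IsLowerSet S) {f g h : FreeGroup K}
    (hf : f ∈ Subgroup.closure (of '' S)) (hg : g ∈ Subgroup.closure (of '' S))
    (hfh : IsPos (f⁻¹ * h)) (hhg : IsPos (h⁻¹ * g)) : h ∈ Subgroup.closure (of '' S) := by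
  induction hn : h.norm using Nat.strong_induction_on generalizing K with
  | _ n ih =>
  by_cases hhS : ↑h.support ⊆ S
  · exact FreeGroup.mem_closure_iff_support_subset.2 hhS
  obtain ⟨r, ⟨hrh, hrS⟩, hr⟩ :=
    h.support.finite_toSet.exists_mem_sdiff_upperBounds_union hS hhS
  rw [upperBounds_union] at hr
  have hr_of_mem {x : FreeGroup K} (hx : x ∈ Subgroup.closure (of '' S)) :
      r ∉ x.support ∧ r ∈ upperBounds (↑x.support : Set K) :=
    have hxS := FreeGroup.mem_closure_iff_support_subset.1 hx
    ⟨fun hrx => hrS (hxS hrx), fun _ hs => hr.2 (hxS hs)⟩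
  obtain ⟨hrf, hubf⟩ := hr_of_mem hf
  obtain ⟨hrg, hubg⟩ := hr_of_mem hg
  have hef := FreeGroup.expSum_eq_one_of_not_mem_support hrf
  have heg := FreeGroup.expSum_eq_one_of_not_mem_support hrg
  have hub₁ := mem_upperBounds_support_mul (u := f⁻¹) (by simpa using hubf) hr.1
  have hub₂ := mem_upperBounds_support_mul (u := h⁻¹) (by simpa using hr.1) hubg
  have heh : expSum r h = 1 := by
    have h₁ := hfh.one_le_expSum hub₁
    have h₂ := hhg.one_le_expSum hub₂
    rw [map_mul, map_inv, hef, inv_one, one_mul] at h₁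
    rw [map_mul, map_inv, heg, mul_one, one_le_inv'] at h₂
    exact le_antisymm h₂ h₁
  rw [isPos_inv_mul_iff_descend hub₁ hef heh, descend_of_not_mem_support hrf] at hfh
  rw [isPos_inv_mul_iff_descend hub₂ heh heg, descend_of_not_mem_support hrg] at hhg
  rw [← conjLift_descend heh]
  exact conjLift_mem_closure r <|
    ih _ (hn ▸ norm_descend_lt hrh) (Layered.isLowerSet_image_base hS)
      (FreeGroup.map_mem_closure_image _ hf) (FreeGroup.map_mem_closure_image _ hg) hfh hhg rfl

end Positivity

/-- Proposition 3.4: the free group on `{x_r : r ∈ ℝ}` admits a left-ordering relative to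
which the subgroup generated by `{x_r : r ∈ S}` is convex for every downward-closed
`S ⊆ ℝ`. -/
theorem stmt1 :
    ∃ P : Set (FreeGroup ℝ), IsPositiveCone P ∧
      ∀ S : Set ℝ, (∀ x ∈ S, ∀ y : ℝ, y < x → y ∈ S) →
        ∀ f ∈ Subgroup.closure (FreeGroup.of '' S),
          ∀ g ∈ Subgroup.closure (FreeGroup.of '' S),
            ∀ h : FreeGroup ℝ, coneLt P f h → coneLt P h g →
              h ∈ Subgroup.closure (FreeGroup.of '' S) := by
  refine ⟨{w | IsPos w}, ⟨fun u hu w hw => hu.mul hw, ?_⟩,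
    fun S hS f hf g hg h hfh hhg => ?_⟩
  · ext w
    simp only [Set.mem_union, Set.mem_ofPred_eq, Set.mem_inv]
    refine ⟨?_, isPos_or_isPos_inv⟩
    rintro (hw | hw)
    exacts [hw.ne_one, inv_ne_one.1 hw.ne_one]
  · exact mem_closure_of_isPos (isLowerSet_iff_forall_lt.2 fun x y hxy hx => hS x hx y hxy)
      hf hg hfh hhg

end Paper
end

section
/- Let F(X) be the free group on X = {x_r : r ∈ ℝ} and let < be a left-ordering of F(X) such that for every downward-closed S ⊆ ℝ (x ∈ S and y < x imply y ∈ S) the subgroup F(X_S) generated by {x_r : r ∈ S} is convex with respect to <. Then < is unnatural: there do not exist an injective group homomorphism ρ : F(X) → Aut(ℝ,≤) and a well-ordering ≺ of ℝ such that for all g, h ∈ F(X), g < h if and only if ρ(g) <_P ρ(h), where <_P is the natural ordering of Aut(ℝ,≤) determined by ≺. -/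
/-!
Let `x` be the `≺`-least point moved by some element of `ρ(F(X))`. All of `ρ(F(X))` fixes the
points `≺`-below `x`, so an element moving `x` upwards is naturally positive, and `g ↦ ρ g x` is
monotone for `<`. Fix `a` with `x < ρ a x`, involving only generators `x_r` with `r ≤ T`, and let
`p_t = x_t^{±1}` be positive. For `T ≤ s < t`, convexity of `F(X_{≤ s})` puts `p_s a` below `p_t`,
so the intervals `(ρ p_t x, ρ (p_t a) x)`, `t > T`, are uncountably many disjoint nonempty open
intervals of `ℝ`.
-/

namespace Paper

open Set

section PositiveCone

variable {G : Type*} [Group G] {P : Set G}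

def IsConeConvex (P : Set G) (C : Subgroup G) : Prop :=
  ∀ f ∈ C, ∀ g ∈ C, ∀ h, coneLt P f h → coneLt P h g → h ∈ C

theorem IsPositiveCone.one_notMem (hP : IsPositiveCone P) : (1 : G) ∉ P := by
  intro h
  have h1 : (1 : G) ∈ P ∪ P⁻¹ := Or.inl h
  rw [hP.2] at h1
  exact h1 rfl

theorem IsPositiveCone.coneLt_asymm (hP : IsPositiveCone P) {a b : G} (hab : coneLt P a b) :
    ¬ coneLt P b a := by
  intro hba
  have h := hP.1 _ hab _ hba
  rw [show a⁻¹ * b * (b⁻¹ * a) = 1 by group] at h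
  exact hP.one_notMem h

theorem IsPositiveCone.coneLt_or_coneLt (hP : IsPositiveCone P) {a b : G} (hab : a ≠ b) :
    coneLt P a b ∨ coneLt P b a := by
  have h : a⁻¹ * b ∈ P ∪ P⁻¹ := by
    rw [hP.2]
    simpa [inv_mul_eq_one] using hab
  simpa [coneLt, Set.mem_inv] using h

theorem IsPositiveCone.exists_one_coneLt (hP : IsPositiveCone P) {g : G} (hg : g ≠ 1) :
    ∃ p, coneLt P 1 p ∧ (p = g ∨ p = g⁻¹) := by
  rcases hP.coneLt_or_coneLt hg.symm with h | h
  · exact ⟨g, h, Or.inl rfl⟩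
  · exact ⟨g⁻¹, by simpa [coneLt] using h, Or.inr rfl⟩

theorem IsConeConvex.coneLt_of_notMem (hP : IsPositiveCone P) {C : Subgroup G}
    (hC : IsConeConvex P C) {g c : G} (hg : coneLt P 1 g) (hgC : g ∉ C) (hc : c ∈ C) :
    coneLt P c g := by
  rcases hP.coneLt_or_coneLt (a := c) (b := g) (by rintro rfl; exact hgC hc) with h | h
  · exact h
  · exact absurd (hC 1 C.one_mem c hc g hg h) hgC

end PositiveCone

section FreeGroup

theorem FreeGroup.of_notMem_closure_image {α : Type*} {S : Set α} {a : α} (ha : a ∉ S) :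
    FreeGroup.of a ∉ Subgroup.closure (FreeGroup.of '' S) := by
  classical
  let π : FreeGroup α →* FreeGroup α := FreeGroup.lift fun x => if x ∈ S then .of x else 1
  have hfix : Set.EqOn π (MonoidHom.id _) (Subgroup.closure (FreeGroup.of '' S)) :=
    MonoidHom.eqOn_closure <| by rintro _ ⟨s, hs, rfl⟩; simp [π, hs]
  intro h
  have h1 : π (FreeGroup.of a) = FreeGroup.of a := hfix h
  simp [π, ha] at h1

theorem FreeGroup.closure_image_Iic_mono {α : Type*} [Preorder α] :
    Monotone fun t : α => Subgroup.closure (FreeGroup.of '' Iic t) :=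
  fun _ _ hst => Subgroup.closure_mono (image_mono (Iic_subset_Iic.2 hst))

theorem FreeGroup.exists_mem_closure_image_Iic {α : Type*} [LinearOrder α] [Nonempty α]
    (g : FreeGroup α) : ∃ T, g ∈ Subgroup.closure (FreeGroup.of '' Iic T) := by
  induction g using FreeGroup.induction_on with
  | C1 => exact ⟨Classical.arbitrary α, one_mem _⟩
  | of a => exact ⟨a, Subgroup.subset_closure ⟨a, le_rfl, rfl⟩⟩
  | inv_of a ih => exact ih.imp fun _ => inv_mem
  | mul g h ihg ihh =>
    obtain ⟨T, hT⟩ := ihg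
    obtain ⟨U, hU⟩ := ihh
    exact ⟨max T U, mul_mem (FreeGroup.closure_image_Iic_mono le_sup_left hT)
      (FreeGroup.closure_image_Iic_mono le_sup_right hU)⟩

end FreeGroup

section NaturalOrdering

variable {Ω : Type*} [LinearOrder Ω] {r : Ω → Ω → Prop} {G : Type*} [Group G]
  (ρ : G →* Ω ≃o Ω)

theorem exists_least_moved_point (hr : WellFounded r) {g₀ : G} (hg₀ : ρ g₀ ≠ 1) :
    ∃ x, (∀ g y, r y x → ρ g y = y) ∧ ∃ g, ρ g x ≠ x := by
  have hne : {x | ∃ g, ρ g x ≠ x}.Nonempty := by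
    by_contra h
    exact hg₀ (OrderIso.ext (funext fun x => not_not.1 fun hx => h ⟨x, g₀, hx⟩))
  obtain ⟨x, hx, hmin⟩ := hr.has_min _ hne
  exact ⟨x, fun g y hy => not_not.1 fun h => hmin y ⟨g, h⟩ hy, hx⟩

theorem exists_lt_apply_of_apply_ne {g : G} {x : Ω} (hx : ρ g x ≠ x) :
    ∃ a, (a = g ∨ a = g⁻¹) ∧ x < ρ a x := by
  rcases hx.lt_or_gt with h | h
  · refine ⟨g⁻¹, Or.inr rfl, ?_⟩
    rw [map_inv]
    exact (ρ g).lt_symm_apply.2 h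
  · exact ⟨g, Or.inl rfl, h⟩

theorem apply_le_apply_of_coneLt {P : Set G} (hP : IsPositiveCone P)
    (hnat : ∀ g h : G, NatLt r (ρ g) (ρ h) → coneLt P g h) {x : Ω}
    (hfix : ∀ g y, r y x → ρ g y = y) {c d : G} (hcd : coneLt P c d) : ρ c x ≤ ρ d x := by
  by_contra! h
  have hlt : x < ρ (d⁻¹ * c) x := by
    rw [map_mul, map_inv]
    exact (ρ d).lt_symm_apply.2 h
  refine hP.coneLt_asymm hcd (hnat d c ?_)
  rw [NatLt, ← map_inv, ← map_mul]
  exact ⟨x, hlt.ne', hfix _, hlt⟩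

end NaturalOrdering

/-- A left-ordering of the free group `F(X)` on `X = {x_r : r ∈ ℝ}` in which the subgroup
generated by `{x_r : r ∈ S}` is convex for every downward-closed `S ⊆ ℝ` is unnatural:
it is not induced, via any injective homomorphism `ρ : F(X) → Aut(ℝ,≤)`, by the natural
ordering of `Aut(ℝ,≤)` determined by any well-ordering of `ℝ`. -/
theorem stmt2 (P : Set (FreeGroup ℝ)) (hP : IsPositiveCone P)
    (hconv : ∀ S : Set ℝ, (∀ x ∈ S, ∀ y : ℝ, y < x → y ∈ S) →
      ∀ f ∈ Subgroup.closure (FreeGroup.of '' S),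
        ∀ g ∈ Subgroup.closure (FreeGroup.of '' S),
          ∀ h : FreeGroup ℝ, coneLt P f h → coneLt P h g →
            h ∈ Subgroup.closure (FreeGroup.of '' S)) :
    ¬ ∃ (ρ : FreeGroup ℝ →* (ℝ ≃o ℝ)) (r : ℝ → ℝ → Prop),
        Function.Injective ρ ∧ IsWellOrder ℝ r ∧
        ∀ g h : FreeGroup ℝ, coneLt P g h ↔ NatLt r (ρ g) (ρ h) := by
  rintro ⟨ρ, r, hinj, hwo, hiff⟩
  let C : ℝ → Subgroup (FreeGroup ℝ) := fun t => Subgroup.closure (FreeGroup.of '' Iic t)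
  have hconvC (t : ℝ) : IsConeConvex P (C t) :=
    hconv _ fun _ hx _ hy => (hy.trans_le hx).le
  obtain ⟨x, hfix, g, hgx⟩ := exists_least_moved_point ρ hwo.wf
    ((map_ne_one_iff ρ hinj).2 (FreeGroup.of_ne_one 0))
  obtain ⟨T, hgT⟩ := FreeGroup.exists_mem_closure_image_Iic g
  obtain ⟨a, ha, hxa⟩ := exists_lt_apply_of_apply_ne ρ hgx
  have haT : a ∈ C T := by rcases ha with rfl | rfl <;> simpa using hgT
  choose p hp hpof using fun t : ℝ => hP.exists_one_coneLt (FreeGroup.of_ne_one t)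
  have hpmem (t : ℝ) (H : Subgroup (FreeGroup ℝ)) : p t ∈ H ↔ FreeGroup.of t ∈ H := by
    rcases hpof t with h | h <;> simp [h]
  have hjump {s t : ℝ} (hTs : T ≤ s) (hst : s < t) : ρ (p s * a) x ≤ ρ (p t) x := by
    have hps : p s ∈ C s := (hpmem s _).2 (Subgroup.subset_closure ⟨s, self_mem_Iic, rfl⟩)
    have hpt : p t ∉ C s := (hpmem t _).not.2 (FreeGroup.of_notMem_closure_image (not_le.2 hst))
    have hpsa : p s * a ∈ C s := mul_mem hps (FreeGroup.closure_image_Iic_mono hTs haT)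
    exact apply_le_apply_of_coneLt ρ hP (fun g h => (hiff g h).2) hfix <|
      (hconvC s).coneLt_of_notMem hP (hp t) hpt hpsa
  have hgap (t : ℝ) : ρ (p t) x < ρ (p t * a) x := by
    rw [map_mul]
    exact (ρ (p t)).lt_iff_lt.2 hxa
  have hcount := countable_image_lt_image_Ioi_within (Ioo T (T + 1)) fun t => ρ (p t) x
  refine (Cardinal.Real.Ioo_countable_iff.1 (hcount.mono fun t ht => ?_)).not_gt (lt_add_one T)
  exact ⟨ht, _, hgap t, fun u _ htu => hjump ht.1.le htu⟩

end Paper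
end

section
/- Let I = {0,1}^ℕ and let G = ⊕_{i∈I} ℤ be the direct sum of I copies of ℤ, with a_i denoting the generator of the i-th summand. Then: (a) for each n ∈ ℕ there exists a positive cone P_n of G such that for every i ∈ I, a_i ∈ P_n if i(n) = 1 and a_i⁻¹ ∈ P_n if i(n) = 0; and (b) any sequence (P_n)_{n∈ℕ} of positive cones of G satisfying these conditions has no convergent subsequence in LO(G). In particular, LO(G) is not sequentially compact. -/
namespace Paper

/-- A positive cone of an additive group `A`: `P + P ⊆ P` and `P ∪ (−P) = A ∖ {0}`. -/
def IsPositiveConeAdd {A : Type*} [AddGroup A] (P : Set A) : Prop :=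
  (∀ a ∈ P, ∀ b ∈ P, a + b ∈ P) ∧ (P ∪ (-P) = {g : A | g ≠ 0})

/-- The index set `I = {0,1}^ℕ`. -/
abbrev IndexSet : Type := ℕ → Bool

/-- `G = ⊕_{i ∈ I} ℤ`, the direct sum of `I` copies of `ℤ`. -/
abbrev DirSumG : Type := DirectSum IndexSet (fun _ => ℤ)

open Classical in
/-- The generator `a_i` of the `i`-th summand. -/
noncomputable def gen (i : IndexSet) : DirSumG := DirectSum.of (fun _ => ℤ) i 1

/-- The space `LO(G)` of positive cones of `G`, encoded by characteristic functions and
given the subspace topology from the product topology on `{0,1}^G`. -/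
abbrev LOSpace (A : Type*) [AddGroup A] : Type _ :=
  {χ : A → Bool // IsPositiveConeAdd {g : A | χ g = true}}

/-- The positive cone corresponding to a point of `LO(G)`. -/
def coneOf {A : Type*} [AddGroup A] (P : LOSpace A) : Set A := {g : A | P.1 g = true}

/-! The cone `P_n` is the lexicographic cone (for any linear order on `I`) after flipping the sign
of every coordinate `i` with `i(n) = 0`. Membership of a fixed element in a cone is a continuous
`Bool`-valued function on `LO(G)`, so along a convergent sequence it is eventually constant. Given
a subsequence `(P_{φ k})`, the index `i` with `i(φ k) = true` exactly for even `k` makes `a_i`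
positive in `P_{φ k}` for even `k` and negative for odd `k`, which rules out convergence. -/

open Filter Topology DirectSum

theorem IsPositiveConeAdd.neg_notMem {A : Type*} [AddGroup A] {P : Set A}
    (hP : IsPositiveConeAdd P) {g : A} (hg : g ∈ P) : -g ∉ P := fun hng => by
  have hzero : (0 : A) ∈ P ∪ -P := Or.inl (add_neg_cancel g ▸ hP.1 g hg (-g) hng)
  rw [hP.2] at hzero
  exact hzero rfl

theorem isPositiveConeAdd_setOf_pos {A : Type*} [AddCommGroup A] [LinearOrder A]
    [IsOrderedAddMonoid A] : IsPositiveConeAdd {g : A | 0 < g} :=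
  ⟨fun _ ha _ hb => add_pos ha hb, by ext g; simp [lt_or_lt_iff_ne, ne_comm]⟩

theorem IsPositiveConeAdd.preimage {A B : Type*} [AddGroup A] [AddGroup B] {P : Set B}
    (hP : IsPositiveConeAdd P) (e : A ≃+ B) : IsPositiveConeAdd (e ⁻¹' P) := by
  refine ⟨fun a ha b hb => by simpa using hP.1 _ ha _ hb, Set.ext fun g => ?_⟩
  simpa using Set.ext_iff.1 hP.2 (e g)

open Classical in
noncomputable def LOSpace.ofCone {A : Type*} [AddGroup A] (P : Set A)
    (hP : IsPositiveConeAdd P) : LOSpace A :=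
  ⟨fun g => decide (g ∈ P), by simpa using hP⟩

@[simp]
theorem coneOf_ofCone {A : Type*} [AddGroup A] (P : Set A) (hP : IsPositiveConeAdd P) :
    coneOf (LOSpace.ofCone P hP) = P := by
  ext g
  simp [coneOf, LOSpace.ofCone]

theorem exists_positiveCone_of_signs {ι : Type*} [DecidableEq ι] (s : ι → Bool) :
    ∃ P : LOSpace (⨁ _ : ι, ℤ), ∀ i,
      (s i = true → of (fun _ => ℤ) i 1 ∈ coneOf P) ∧
        (s i = false → -of (fun _ => ℤ) i 1 ∈ coneOf P) := by
  let _ : LinearOrder ι := IsWellOrder.linearOrder WellOrderingRel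
  let e : (⨁ _ : ι, ℤ) ≃+ (⨁ _ : ι, ℤ) :=
    DFinsupp.mapRange.addEquiv fun i => bif s i then AddEquiv.refl ℤ else AddEquiv.neg ℤ
  have hcone : IsPositiveConeAdd {g : ⨁ _ : ι, ℤ | 0 < toLex (α := Π₀ _ : ι, ℤ) (e g)} :=
    (isPositiveConeAdd_setOf_pos (A := Lex (Π₀ _ : ι, ℤ))).preimage e
  have hof : ∀ i, 0 < toLex (α := Π₀ _ : ι, ℤ) (of _ i 1) := fun i =>
    DFinsupp.Lex.lt_iff.2 ⟨i, fun j hj => by simp [of_eq_of_ne i j 1 hj.ne], by simp [of_eq_same]⟩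
  have he : ∀ i x, e (of _ i x) = of _ i (bif s i then x else -x) := fun i x => by
    refine (DFinsupp.mapRange_single (hf := fun j => map_zero _)).trans ?_
    cases s i <;> rfl
  refine ⟨LOSpace.ofCone _ hcone, fun i => ⟨fun hi => ?_, fun hi => ?_⟩⟩
  · simpa [he, hi] using hof i
  · simpa [he, hi] using hof i

theorem LOSpace.eventually_mem_coneOf_iff {A α : Type*} [AddGroup A] {l : Filter α}
    {u : α → LOSpace A} {L : LOSpace A} (h : Tendsto u l (𝓝 L)) (g : A) :
    ∀ᶠ k in l, (g ∈ coneOf (u k) ↔ g ∈ coneOf L) := by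
  have hg := (((continuous_apply g).comp continuous_subtype_val).tendsto L).comp h
  rw [nhds_discrete, tendsto_pure] at hg
  filter_upwards [hg] with k hk
  exact Iff.of_eq (congrArg (· = true) hk)

theorem LOSpace.not_tendsto_of_frequently {A α : Type*} [AddGroup A] {l : Filter α}
    {u : α → LOSpace A} {g : A} (hpos : ∃ᶠ k in l, g ∈ coneOf (u k))
    (hneg : ∃ᶠ k in l, -g ∈ coneOf (u k)) (L : LOSpace A) : ¬ Tendsto u l (𝓝 L) := by
  intro h
  have hev := LOSpace.eventually_mem_coneOf_iff h g
  by_cases hL : g ∈ coneOf L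
  · exact hneg (hev.mono fun k hk => (u k).2.neg_notMem (hk.2 hL))
  · exact hpos (hev.mono fun k hk hgk => hL (hk.1 hgk))

theorem LOSpace.not_tendsto_subseq_of_signs {A : Type*} [AddGroup A] (a : (ℕ → Bool) → A)
    {Pn : ℕ → LOSpace A}
    (hPn : ∀ n i, (i n = true → a i ∈ coneOf (Pn n)) ∧ (i n = false → -a i ∈ coneOf (Pn n)))
    {φ : ℕ → ℕ} (hφ : StrictMono φ) (L : LOSpace A) : ¬ Tendsto (Pn ∘ φ) atTop (𝓝 L) := by
  let i : ℕ → Bool := Function.extend φ (fun k => decide (Even k)) fun _ => false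
  have hi : ∀ k, i (φ k) = decide (Even k) := hφ.injective.extend_apply _ _
  refine LOSpace.not_tendsto_of_frequently (g := a i) ?_ ?_ L
  · exact frequently_atTop.2 fun k => ⟨2 * k, by omega, (hPn _ i).1 (by simp [hi])⟩
  · exact frequently_atTop.2 fun k => ⟨2 * k + 1, by omega, (hPn _ i).2 (by simp [hi])⟩

/-- Example 4.16: (a) for each `n ∈ ℕ` there is a positive cone `P_n` of
`G = ⊕_{i ∈ {0,1}^ℕ} ℤ` with `a_i ∈ P_n` when `i(n) = 1` and `−a_i ∈ P_n` when
`i(n) = 0`; (b) any sequence of positive cones with these properties has no convergent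
subsequence in `LO(G)`; in particular `LO(G)` is not sequentially compact. -/
theorem stmt14 :
    (∃ Pn : ℕ → LOSpace DirSumG, ∀ n : ℕ, ∀ i : IndexSet,
      (i n = true → gen i ∈ coneOf (Pn n)) ∧ (i n = false → -(gen i) ∈ coneOf (Pn n))) ∧
    (∀ Pn : ℕ → LOSpace DirSumG,
      (∀ n : ℕ, ∀ i : IndexSet,
        (i n = true → gen i ∈ coneOf (Pn n)) ∧ (i n = false → -(gen i) ∈ coneOf (Pn n))) →
      ¬ ∃ (L : LOSpace DirSumG) (φ : ℕ → ℕ), StrictMono φ ∧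
          Filter.Tendsto (Pn ∘ φ) Filter.atTop (nhds L)) ∧
    ¬ IsSeqCompact (Set.univ : Set (LOSpace DirSumG)) := by
  classical
  choose Pn hPn using fun n : ℕ => exists_positiveCone_of_signs fun i : IndexSet => i n
  refine ⟨⟨Pn, hPn⟩, fun Qn hQn ⟨L, φ, hφ, hL⟩ =>
    LOSpace.not_tendsto_subseq_of_signs gen hQn hφ L hL, fun hsc => ?_⟩
  obtain ⟨L, -, φ, hφ, hL⟩ := hsc (x := Pn) fun n => Set.mem_univ _
  exact LOSpace.not_tendsto_subseq_of_signs gen hPn hφ L hL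

end Paper
end
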